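/- arXiv:1402.3438 — 3 statements merged into one kernel-verified Lean document; each statement's English description precedes it below -/
import Mathlib

section
/- Let G be a connected locally finite graph with graph distance d, and f₀, f₁ finitely supported probability distributions on G. Let γ⁽¹⁾, γ⁽²⁾ be geodesics of G whose endpoint pairs (e₀(γ⁽ⁱ⁾), e₁(γ⁽ⁱ⁾)) lie in C(f₀,f₁). Then for indices k₁ ≤ L(γ⁽¹⁾)−1 and k₂ ≤ L(γ⁽²⁾)−1, it is impossible that both γ⁽¹⁾(k₁) = γ⁽²⁾(k₂+1) and γ⁽¹⁾(k₁+1) = γ⁽²⁾(k₂). -/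
open scoped BigOperators Classical

noncomputable section

variable {V : Type*}

/-- π is a coupling of the finitely supported distributions f₀ and f₁. -/
def IsCoupling (f₀ f₁ : V →₀ ℝ) (π : V × V →₀ ℝ) : Prop :=
  (∀ p, 0 ≤ π p) ∧
    (∀ x, (π.sum fun p v => if p.1 = x then v else 0) = f₀ x) ∧
    (∀ y, (π.sum fun p v => if p.2 = y then v else 0) = f₁ y)

/-- Transport cost of a coupling, for the graph distance of G. -/
def gcost (G : SimpleGraph V) (π : V × V →₀ ℝ) : ℝ :=
  π.sum fun p v => (G.dist p.1 p.2 : ℝ) * v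

/-- π is a W₁-optimal coupling of f₀ and f₁ on the graph G. -/
def IsOptimalCoupling (G : SimpleGraph V) (f₀ f₁ : V →₀ ℝ) (π : V × V →₀ ℝ) : Prop :=
  IsCoupling f₀ f₁ π ∧ ∀ π', IsCoupling f₀ f₁ π' → gcost G π ≤ gcost G π'

/-- C(f₀,f₁): union of the supports of all W₁-optimal couplings. -/
def commonSupport (G : SimpleGraph V) (f₀ f₁ : V →₀ ℝ) : Set (V × V) :=
  {p | ∃ π, IsOptimalCoupling G f₀ f₁ π ∧ 0 < π p}

/-- f is a (finitely supported) probability distribution. -/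
def IsProb (f : V →₀ ℝ) : Prop := (∀ x, 0 ≤ f x) ∧ (f.sum fun _ v => v) = 1

/-- γ(0),…,γ(n) is a geodesic of G of length n. -/
def IsGeodesic (G : SimpleGraph V) (γ : ℕ → V) (n : ℕ) : Prop :=
  (∀ i < n, G.Adj (γ i) (γ (i + 1))) ∧ G.dist (γ 0) (γ n) = n

/-- Linear functional on finitely supported measures. -/
def lin (g : V × V → ℝ) (π : V × V →₀ ℝ) : ℝ := π.sum fun p v => g p * v

lemma lin_add (g : V × V → ℝ) (π π' : V × V →₀ ℝ) :
    lin g (π + π') = lin g π + lin g π' :=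
  Finsupp.sum_add_index' (fun p => by simp) (fun p v w => by ring)

lemma lin_sub (g : V × V → ℝ) (π π' : V × V →₀ ℝ) :
    lin g (π - π') = lin g π - lin g π' :=
  Finsupp.sum_sub_index (fun p v w => by ring)

lemma lin_smul (g : V × V → ℝ) (c : ℝ) (π : V × V →₀ ℝ) :
    lin g (c • π) = c * lin g π := by
  unfold lin
  rw [Finsupp.sum_smul_index' (fun p => by simp)]
  rw [Finsupp.mul_sum]
  exact Finsupp.sum_congr fun p _ => by simp [smul_eq_mul]; ring

lemma lin_single (g : V × V → ℝ) (p : V × V) (a : ℝ) :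
    lin g (Finsupp.single p a) = g p * a :=
  Finsupp.sum_single_index (by simp)

lemma marg1_eq_lin (π : V × V →₀ ℝ) (x : V) :
    (π.sum fun p v => if p.1 = x then v else 0)
      = lin (fun p => if p.1 = x then 1 else 0) π :=
  Finsupp.sum_congr fun p _ => by dsimp; split_ifs <;> ring

lemma marg2_eq_lin (π : V × V →₀ ℝ) (y : V) :
    (π.sum fun p v => if p.2 = y then v else 0)
      = lin (fun p => if p.2 = y then 1 else 0) π :=
  Finsupp.sum_congr fun p _ => by dsimp; split_ifs <;> ring

lemma gcost_eq_lin (G : SimpleGraph V) (π : V × V →₀ ℝ) :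
    gcost G π = lin (fun p => (G.dist p.1 p.2 : ℝ)) π := rfl

lemma dist_le_chain (G : SimpleGraph V) (hconn : G.Connected) (γ : ℕ → V) (n : ℕ)
    (h : ∀ i < n, G.Adj (γ i) (γ (i + 1))) :
    ∀ b, b ≤ n → ∀ a, a ≤ b → G.dist (γ a) (γ b) ≤ b - a := by
  intro b
  induction b with
  | zero => intro _ a ha; interval_cases a; simp
  | succ b ih =>
      intro hbn a ha
      rcases Nat.eq_or_lt_of_le ha with rfl | ha'
      · simp
      · have ha'' : a ≤ b := Nat.lt_succ_iff.mp ha'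
        have h1 := ih (Nat.le_of_succ_le hbn) a ha''
        have h2 : G.dist (γ b) (γ (b + 1)) = 1 :=
          (SimpleGraph.dist_eq_one_iff_adj).mpr (h b (Nat.lt_of_succ_le hbn))
        have := hconn.dist_triangle (u := γ a) (v := γ b) (w := γ (b + 1))
        omega

theorem W1_orientation_well_defined
    (G : SimpleGraph V) (hconn : G.Connected) [G.LocallyFinite]
    (f₀ f₁ : V →₀ ℝ) (h₀ : IsProb f₀) (h₁ : IsProb f₁)
    (γ₁ γ₂ : ℕ → V) (n₁ n₂ : ℕ)
    (hγ₁ : IsGeodesic G γ₁ n₁) (hγ₂ : IsGeodesic G γ₂ n₂)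
    (he₁ : (γ₁ 0, γ₁ n₁) ∈ commonSupport G f₀ f₁)
    (he₂ : (γ₂ 0, γ₂ n₂) ∈ commonSupport G f₀ f₁)
    (k₁ k₂ : ℕ) (hk₁ : k₁ + 1 ≤ n₁) (hk₂ : k₂ + 1 ≤ n₂) :
    ¬(γ₁ k₁ = γ₂ (k₂ + 1) ∧ γ₁ (k₁ + 1) = γ₂ k₂) := by
  rintro ⟨hA, hB⟩
  obtain ⟨π₁, hopt₁, hpos₁⟩ := he₁
  obtain ⟨π₂, hopt₂, hpos₂⟩ := he₂
  have hd₁ : G.dist (γ₁ 0) (γ₁ n₁) = n₁ := hγ₁.2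
  have hd₂ : G.dist (γ₂ 0) (γ₂ n₂) = n₂ := hγ₂.2
  -- chain distance bounds
  have c1 : G.dist (γ₁ 0) (γ₁ k₁) ≤ k₁ := by
    simpa using dist_le_chain G hconn γ₁ n₁ hγ₁.1 k₁ (by omega) 0 (by omega)
  have c2 : G.dist (γ₂ (k₂ + 1)) (γ₂ n₂) ≤ n₂ - (k₂ + 1) :=
    dist_le_chain G hconn γ₂ n₂ hγ₂.1 n₂ le_rfl (k₂ + 1) hk₂
  have c3 : G.dist (γ₂ 0) (γ₂ k₂) ≤ k₂ := by
    simpa using dist_le_chain G hconn γ₂ n₂ hγ₂.1 k₂ (by omega) 0 (by omega)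
  have c4 : G.dist (γ₁ (k₁ + 1)) (γ₁ n₁) ≤ n₁ - (k₁ + 1) :=
    dist_le_chain G hconn γ₁ n₁ hγ₁.1 n₁ le_rfl (k₁ + 1) hk₁
  have t1 : G.dist (γ₁ 0) (γ₂ n₂) ≤ k₁ + (n₂ - (k₂ + 1)) := by
    have := hconn.dist_triangle (u := γ₁ 0) (v := γ₁ k₁) (w := γ₂ n₂)
    rw [hA] at this c1
    omega
  have t2 : G.dist (γ₂ 0) (γ₁ n₁) ≤ k₂ + (n₁ - (k₁ + 1)) := by
    have := hconn.dist_triangle (u := γ₂ 0) (v := γ₂ k₂) (w := γ₁ n₁)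
    rw [hB] at c4
    omega
  by_cases hpp : ((γ₁ 0, γ₁ n₁) : V × V) = (γ₂ 0, γ₂ n₂)
  · rw [Prod.mk.injEq] at hpp
    obtain ⟨e0, e1⟩ := hpp
    rw [← e1] at t1
    rw [← e0] at t2
    rw [← e0, ← e1] at hd₂
    omega
  -- the interesting case: an improved coupling
  set p₁ : V × V := (γ₁ 0, γ₁ n₁) with hp₁
  set p₂ : V × V := (γ₂ 0, γ₂ n₂) with hp₂
  set q₁ : V × V := (γ₁ 0, γ₂ n₂) with hq₁
  set q₂ : V × V := (γ₂ 0, γ₁ n₁) with hq₂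
  set μ : V × V →₀ ℝ := (2⁻¹ : ℝ) • (π₁ + π₂) with hμ
  have hμapp : ∀ p, μ p = 2⁻¹ * (π₁ p + π₂ p) := fun p => by simp [hμ]; ring
  have hμnn : ∀ p, 0 ≤ μ p := fun p => by
    rw [hμapp]
    have := hopt₁.1.1 p
    have := hopt₂.1.1 p
    positivity
  set ε : ℝ := min (μ p₁) (μ p₂) with hε
  have hεpos : 0 < ε := by
    rw [hε]
    have h2 := hopt₂.1.1 p₁
    have h3 := hopt₁.1.1 p₂
    refine lt_min ?_ ?_ <;> rw [hμapp] <;> nlinarith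
  have hε₁ : ε ≤ μ p₁ := min_le_left _ _
  have hε₂ : ε ≤ μ p₂ := min_le_right _ _
  set π' : V × V →₀ ℝ :=
    μ - Finsupp.single p₁ ε - Finsupp.single p₂ ε
      + Finsupp.single q₁ ε + Finsupp.single q₂ ε with hπ'
  -- lin of π'
  have hlin : ∀ g : V × V → ℝ,
      lin g π' = 2⁻¹ * (lin g π₁ + lin g π₂) + (g q₁ + g q₂ - g p₁ - g p₂) * ε := by
    intro g
    rw [hπ', lin_add, lin_add, lin_sub, lin_sub, hμ, lin_smul, lin_add,
      lin_single, lin_single, lin_single, lin_single]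
    ring
  -- π' is a coupling
  have hcoup : IsCoupling f₀ f₁ π' := by
    refine ⟨?_, ?_, ?_⟩
    · intro p
      rw [hπ']
      simp only [Finsupp.coe_add, Finsupp.coe_sub, Pi.add_apply, Pi.sub_apply]
      have hq1 : 0 ≤ (Finsupp.single q₁ ε) p := by
        rw [Finsupp.single_apply]; split_ifs <;> linarith [hεpos.le]
      have hq2 : 0 ≤ (Finsupp.single q₂ ε) p := by
        rw [Finsupp.single_apply]; split_ifs <;> linarith [hεpos.le]
      have key : (Finsupp.single p₁ ε) p + (Finsupp.single p₂ ε) p ≤ μ p := by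
        rw [Finsupp.single_apply, Finsupp.single_apply]
        split_ifs with h1 h2
        · exact absurd (h1.trans h2.symm) hpp
        · subst h1; linarith [hε₁]
        · rename_i h2'
          subst h2'; linarith [hε₂]
        · linarith [hμnn p]
      linarith
    · intro x
      rw [marg1_eq_lin, hlin]
      have e1 := hopt₁.1.2.1 x
      have e2 := hopt₂.1.2.1 x
      rw [marg1_eq_lin] at e1 e2
      rw [e1, e2]
      simp only [hp₁, hp₂, hq₁, hq₂]
      ring
    · intro y
      rw [marg2_eq_lin, hlin]
      have e1 := hopt₁.1.2.2 y
      have e2 := hopt₂.1.2.2 y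
      rw [marg2_eq_lin] at e1 e2
      rw [e1, e2]
      simp only [hp₁, hp₂, hq₁, hq₂]
      ring
  -- cost comparison
  have hnat : G.dist (γ₁ 0) (γ₂ n₂) + G.dist (γ₂ 0) (γ₁ n₁) + 2 ≤ n₁ + n₂ := by omega
  have hcost : gcost G π' ≤ gcost G π₁ - 2 * ε := by
    rw [gcost_eq_lin, hlin]
    have hgc₁ : lin (fun p => (G.dist p.1 p.2 : ℝ)) π₁ = gcost G π₁ := rfl
    have hgc₂ : lin (fun p => (G.dist p.1 p.2 : ℝ)) π₂ = gcost G π₂ := rfl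
    rw [hgc₁, hgc₂]
    have heq : gcost G π₂ = gcost G π₁ :=
      le_antisymm (hopt₂.2 π₁ hopt₁.1) (hopt₁.2 π₂ hopt₂.1)
    have hreal : ((G.dist q₁.1 q₁.2 : ℝ) + (G.dist q₂.1 q₂.2 : ℝ)
        - (G.dist p₁.1 p₁.2 : ℝ) - (G.dist p₂.1 p₂.2 : ℝ)) ≤ -2 := by
      simp only [hp₁, hp₂, hq₁, hq₂]
      rw [hd₁, hd₂]
      push_cast
      have : (G.dist (γ₁ 0) (γ₂ n₂) + G.dist (γ₂ 0) (γ₁ n₁) + 2 : ℝ) ≤ (n₁ : ℝ) + n₂ := by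
        exact_mod_cast hnat
      linarith
    nlinarith
  have := hopt₁.2 π' hcoup
  linarith
end
end

section
/- Let G be a connected locally finite graph, W₁-oriented with respect to finitely supported distributions f₀, f₁ (an edge x→y is oriented if some geodesic γ with endpoint pair in C(f₀,f₁) traverses it in that direction). Then every oriented path in (G,→) is a geodesic of G; i.e., if γ(0)→γ(1)→…→γ(n) then d(γ(0),γ(n)) = n. -/
open scoped BigOperators Classical

noncomputable section

variable {V : Type*}

/-- The W₁-orientation: x → y if some geodesic with endpoint pair in C(f₀,f₁)
traverses the edge (x,y) in that direction. -/
def OrientedEdge (G : SimpleGraph V) (f₀ f₁ : V →₀ ℝ) (x y : V) : Prop :=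
  ∃ (γ : ℕ → V) (n k : ℕ), IsGeodesic G γ n ∧
    (γ 0, γ n) ∈ commonSupport G f₀ f₁ ∧ k + 1 ≤ n ∧ γ k = x ∧ γ (k + 1) = y

/-! Averaging optimal couplings gives one optimal coupling `Φ` charging every endpoint pair
`(aᵢ, bᵢ)` of the geodesics through the oriented edges `γ i → γ (i + 1)`. Moving a little
of its mass from the pairs `(aᵢ, bᵢ)` to the cyclically shifted pairs `(aᵢ₊₁, bᵢ)` keeps both
marginals, so optimality yields `∑ d(aᵢ, bᵢ) ≤ d(a₀, bₙ₋₁) + ∑ d(aᵢ₊₁, bᵢ)`. Since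
`d(aᵢ, bᵢ) = d(aᵢ, γ i) + 1 + d(γ (i + 1), bᵢ)`, the triangle inequality through the vertices
of `γ` turns this into `n ≤ d(γ 0, γ n)`. -/

open Finset Filter Topology

variable {G : SimpleGraph V} {f₀ f₁ : V →₀ ℝ}

lemma Finsupp.mapDomain_apply_eq_sum_ite {α β M : Type*} [AddCommMonoid M] (g : α → β)
    (π : α →₀ M) (b : β) : π.mapDomain g b = π.sum fun a v => if g a = b then v else 0 := by
  simp [Finsupp.mapDomain, Finsupp.finsetSum_apply, Finsupp.sum, Finsupp.single_apply]

lemma isCoupling_iff {π : V × V →₀ ℝ} :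
    IsCoupling f₀ f₁ π ↔ 0 ≤ π ∧ π.mapDomain Prod.fst = f₀ ∧ π.mapDomain Prod.snd = f₁ := by
  simp only [IsCoupling, Finsupp.le_def, Finsupp.ext_iff, Finsupp.mapDomain_apply_eq_sum_ite,
    Finsupp.coe_zero, Pi.zero_apply]

lemma gcost_eq_linearCombination (π : V × V →₀ ℝ) :
    gcost G π = Finsupp.linearCombination ℝ (fun p : V × V => (G.dist p.1 p.2 : ℝ)) π := by
  simp [gcost, Finsupp.linearCombination_apply, mul_comm]

lemma gcost_add (π π' : V × V →₀ ℝ) : gcost G (π + π') = gcost G π + gcost G π' := by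
  simp only [gcost_eq_linearCombination, map_add]

lemma gcost_sub (π π' : V × V →₀ ℝ) : gcost G (π - π') = gcost G π - gcost G π' := by
  simp only [gcost_eq_linearCombination, map_sub]

lemma gcost_smul (a : ℝ) (π : V × V →₀ ℝ) : gcost G (a • π) = a * gcost G π := by
  simp only [gcost_eq_linearCombination, map_smul, smul_eq_mul]

lemma gcost_sum {ι : Type*} (s : Finset ι) (π : ι → V × V →₀ ℝ) :
    gcost G (∑ i ∈ s, π i) = ∑ i ∈ s, gcost G (π i) := by
  simp only [gcost_eq_linearCombination, map_sum]

lemma gcost_single_one (p : V × V) : gcost G (Finsupp.single p 1) = G.dist p.1 p.2 := by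
  simp [gcost_eq_linearCombination]

lemma IsCoupling.convexComb {π π' : V × V →₀ ℝ} (h : IsCoupling f₀ f₁ π)
    (h' : IsCoupling f₀ f₁ π') {a b : ℝ} (ha : 0 ≤ a) (hb : 0 ≤ b) (hab : a + b = 1) :
    IsCoupling f₀ f₁ (a • π + b • π') := by
  obtain ⟨hπ, hπ₁, hπ₂⟩ := isCoupling_iff.1 h
  obtain ⟨hπ', hπ'₁, hπ'₂⟩ := isCoupling_iff.1 h'
  refine isCoupling_iff.2 ⟨add_nonneg (smul_nonneg ha hπ) (smul_nonneg hb hπ'), ?_, ?_⟩ <;>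
    simp only [Finsupp.mapDomain_add, Finsupp.mapDomain_smul, hπ₁, hπ₂, hπ'₁, hπ'₂, ← add_smul,
      hab, one_smul]

lemma IsOptimalCoupling.convexComb {π π' : V × V →₀ ℝ} (h : IsOptimalCoupling G f₀ f₁ π)
    (h' : IsOptimalCoupling G f₀ f₁ π') {a b : ℝ} (ha : 0 ≤ a) (hb : 0 ≤ b) (hab : a + b = 1) :
    IsOptimalCoupling G f₀ f₁ (a • π + b • π') := by
  refine ⟨h.1.convexComb h'.1 ha hb hab, fun σ hσ => ?_⟩
  calc gcost G (a • π + b • π') = a * gcost G π + b * gcost G π' := by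
        rw [gcost_add, gcost_smul, gcost_smul]
    _ ≤ a * gcost G σ + b * gcost G σ := by gcongr; exacts [h.2 σ hσ, h'.2 σ hσ]
    _ = gcost G σ := by rw [← add_mul, hab, one_mul]

lemma exists_isOptimalCoupling_forall_pos {s : Finset (V × V)} (hs : s.Nonempty)
    (hC : ∀ p ∈ s, p ∈ commonSupport G f₀ f₁) :
    ∃ Φ, IsOptimalCoupling G f₀ f₁ Φ ∧ ∀ p ∈ s, 0 < Φ p := by
  induction hs using Finset.Nonempty.cons_induction with
  | singleton p => simpa [commonSupport] using hC p (mem_singleton_self p)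
  | cons p s _ _ ih =>
    obtain ⟨Φ, hΦ, hΦpos⟩ := ih fun q hq => hC q (mem_cons_of_mem hq)
    obtain ⟨π, hπ, hπp⟩ := hC p (mem_cons_self p s)
    refine ⟨(1 / 2 : ℝ) • π + (1 / 2 : ℝ) • Φ,
      hπ.convexComb hΦ (by norm_num) (by norm_num) (by norm_num), ?_⟩
    simp only [forall_mem_cons, Finsupp.add_apply, Finsupp.smul_apply, smul_eq_mul]
    exact ⟨by linarith [hΦ.1.1 p], fun q hq => by linarith [hπ.1.1 q, hΦpos q hq]⟩

lemma IsOptimalCoupling.gcost_le_of_le_of_mapDomain_eq {Φ α β : V × V →₀ ℝ}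
    (hΦ : IsOptimalCoupling G f₀ f₁ Φ) (hα : 0 ≤ α) (hβ : β ≤ Φ)
    (h₁ : α.mapDomain Prod.fst = β.mapDomain Prod.fst)
    (h₂ : α.mapDomain Prod.snd = β.mapDomain Prod.snd) : gcost G β ≤ gcost G α := by
  obtain ⟨-, hΦ₁, hΦ₂⟩ := isCoupling_iff.1 hΦ.1
  have hcoup : IsCoupling f₀ f₁ (Φ - β + α) := by
    refine isCoupling_iff.2 ⟨add_nonneg (sub_nonneg.2 hβ) hα, ?_, ?_⟩ <;>
      simp only [Finsupp.mapDomain_add, Finsupp.mapDomain_sub, h₁, h₂, sub_add_cancel, hΦ₁, hΦ₂]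
  have := hΦ.2 _ hcoup
  rw [gcost_add, gcost_sub] at this
  linarith

lemma IsOptimalCoupling.gcost_le_of_mapDomain_eq {Φ S T : V × V →₀ ℝ}
    (hΦ : IsOptimalCoupling G f₀ f₁ Φ) (hT : 0 ≤ T) (hS : ∀ p ∈ S.support, 0 < Φ p)
    (h₁ : T.mapDomain Prod.fst = S.mapDomain Prod.fst)
    (h₂ : T.mapDomain Prod.snd = S.mapDomain Prod.snd) : gcost G S ≤ gcost G T := by
  have hsmall : ∀ᶠ ε in 𝓝[>] (0 : ℝ), ∀ p ∈ S.support, ε * S p < Φ p := by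
    refine (eventually_all_finset _).2 fun p hp => ?_
    refine Tendsto.eventually_lt_const (by simpa using hS p hp) ?_
    simpa using ((continuous_mul_const (S p)).tendsto 0).mono_left nhdsWithin_le_nhds
  obtain ⟨ε, hεS, hε⟩ := (hsmall.and self_mem_nhdsWithin).exists
  have hεS' : ε • S ≤ Φ := fun p => by
    by_cases hp : p ∈ S.support
    · exact (hεS p hp).le
    · simpa [Finsupp.notMem_support_iff.1 hp] using hΦ.1.1 p
  have := hΦ.gcost_le_of_le_of_mapDomain_eq (smul_nonneg (le_of_lt hε) hT) hεS'
    (by rw [Finsupp.mapDomain_smul, Finsupp.mapDomain_smul, h₁])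
    (by rw [Finsupp.mapDomain_smul, Finsupp.mapDomain_smul, h₂])
  rw [gcost_smul, gcost_smul] at this
  exact le_of_mul_le_mul_left this hε

theorem sum_dist_le_of_forall_mem_commonSupport {x y : ℕ → V} {m : ℕ}
    (hC : ∀ i ≤ m, (x i, y i) ∈ commonSupport G f₀ f₁) :
    ∑ i ∈ range (m + 1), G.dist (x i) (y i) ≤
      G.dist (x 0) (y m) + ∑ i ∈ range m, G.dist (x (i + 1)) (y i) := by
  obtain ⟨Φ, hΦ, hΦpos⟩ := exists_isOptimalCoupling_forall_pos
    (s := (range (m + 1)).image fun i => (x i, y i)) (by simp)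
    (by simpa [Nat.lt_succ_iff] using hC)
  set S : V × V →₀ ℝ := ∑ i ∈ range (m + 1), Finsupp.single (x i, y i) 1
  set T : V × V →₀ ℝ :=
    Finsupp.single (x 0, y m) 1 + ∑ i ∈ range m, Finsupp.single (x (i + 1), y i) 1
  have hT : 0 ≤ T :=
    add_nonneg (by simp) (sum_nonneg fun i _ => by simp)
  have hS : ∀ p ∈ S.support, 0 < Φ p := fun p hp => by
    obtain ⟨i, hi, hpi⟩ := mem_biUnion.1 (Finsupp.support_finsetSum hp)
    rw [Finsupp.mem_support_single] at hpi
    exact hΦpos p (mem_image.2 ⟨i, hi, hpi.1.symm⟩)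
  have h₁ : T.mapDomain Prod.fst = S.mapDomain Prod.fst := by
    simp only [S, T, Finsupp.mapDomain_add, Finsupp.mapDomain_finsetSum, Finsupp.mapDomain_single,
      sum_range_succ' _ m, add_comm]
  have h₂ : T.mapDomain Prod.snd = S.mapDomain Prod.snd := by
    simp only [S, T, Finsupp.mapDomain_add, Finsupp.mapDomain_finsetSum, Finsupp.mapDomain_single,
      sum_range_succ _ m, add_comm]
  have := hΦ.gcost_le_of_mapDomain_eq hT hS h₁ h₂
  simp only [S, T, gcost_add, gcost_sum, gcost_single_one] at this
  exact_mod_cast this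

lemma dist_le_of_forall_adj {γ : ℕ → V} {n : ℕ} (h : ∀ i < n, G.Adj (γ i) (γ (i + 1))) :
    G.dist (γ 0) (γ n) ≤ n := by
  induction n with
  | zero => simp
  | succ n ih =>
    have hn := h n n.lt_succ_self
    calc G.dist (γ 0) (γ (n + 1)) ≤ G.dist (γ 0) (γ n) + G.dist (γ n) (γ (n + 1)) :=
          hn.reachable.dist_triangle_right _
      _ ≤ n + 1 := by
          rw [SimpleGraph.dist_eq_one_iff_adj.2 hn]
          exact Nat.add_le_add_right (ih fun i hi => h i (by omega)) 1

lemma IsGeodesic.dist_add_one_add_dist (hconn : G.Connected) {σ : ℕ → V} {N k : ℕ}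
    (hσ : IsGeodesic G σ N) (hk : k + 1 ≤ N) :
    G.dist (σ 0) (σ k) + 1 + G.dist (σ (k + 1)) (σ N) = G.dist (σ 0) (σ N) := by
  have h₁ : G.dist (σ 0) (σ k) ≤ k := dist_le_of_forall_adj fun i hi => hσ.1 i (by omega)
  have h₂ : G.dist (σ (k + 1)) (σ N) ≤ N - (k + 1) := by
    simpa [Nat.add_sub_cancel' hk] using dist_le_of_forall_adj (γ := fun i => σ (k + 1 + i))
      (n := N - (k + 1)) fun i hi => by simpa [add_assoc] using hσ.1 (k + 1 + i) (by omega)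
  have h₃ := hconn.dist_triangle (u := σ 0) (v := σ k) (w := σ N)
  have h₄ := hconn.dist_triangle (u := σ k) (v := σ (k + 1)) (w := σ N)
  have h₅ := SimpleGraph.dist_eq_one_iff_adj.2 (hσ.1 k hk)
  have h₆ := hσ.2
  omega

variable {x y : V}

lemma OrientedEdge.adj (h : OrientedEdge G f₀ f₁ x y) : G.Adj x y := by
  obtain ⟨σ, N, k, hσ, -, hk, rfl, rfl⟩ := h
  exact hσ.1 k hk

lemma OrientedEdge.exists_mem_commonSupport (hconn : G.Connected) (h : OrientedEdge G f₀ f₁ x y) :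
    ∃ a b, (a, b) ∈ commonSupport G f₀ f₁ ∧ G.dist a x + 1 + G.dist y b = G.dist a b := by
  obtain ⟨σ, N, k, hσ, hC, hk, rfl, rfl⟩ := h
  exact ⟨σ 0, σ N, hC, hσ.dist_add_one_add_dist hconn hk⟩

lemma le_dist_of_forall_orientedEdge (hconn : G.Connected) {γ : ℕ → V} {m : ℕ}
    (h : ∀ i ≤ m, OrientedEdge G f₀ f₁ (γ i) (γ (i + 1))) :
    m + 1 ≤ G.dist (γ 0) (γ (m + 1)) := by
  have hends : ∀ i ≤ m, ∃ a b, (a, b) ∈ commonSupport G f₀ f₁ ∧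
      G.dist a (γ i) + 1 + G.dist (γ (i + 1)) b = G.dist a b :=
    fun i hi => (h i hi).exists_mem_commonSupport hconn
  have : Nonempty V := ⟨γ 0⟩
  choose! a b hC hsplit using hends
  set A : ℕ → ℕ := fun i => G.dist (a i) (γ i)
  set B : ℕ → ℕ := fun i => G.dist (γ (i + 1)) (b i)
  have hcyc := sum_dist_le_of_forall_mem_commonSupport hC
  have hsum : ∑ i ∈ range (m + 1), G.dist (a i) (b i) = ∑ i ∈ range (m + 1), (A i + 1 + B i) :=
    (sum_congr rfl fun i hi => hsplit i (by simpa [Nat.lt_succ_iff] using hi)).symm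
  have hlast : G.dist (a 0) (b m) ≤ A 0 + G.dist (γ 0) (γ (m + 1)) + B m := by
    have := hconn.dist_triangle (u := a 0) (v := γ 0) (w := b m)
    have := hconn.dist_triangle (u := γ 0) (v := γ (m + 1)) (w := b m)
    dsimp only [A, B]
    omega
  have hstep : ∑ i ∈ range m, G.dist (a (i + 1)) (b i) ≤ ∑ i ∈ range m, (A (i + 1) + B i) :=
    sum_le_sum fun i _ => hconn.dist_triangle
  rw [hsum, sum_add_distrib, sum_add_distrib, sum_const, card_range, smul_eq_mul, mul_one,
    sum_range_succ' A, sum_range_succ B] at hcyc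
  rw [sum_add_distrib] at hstep
  omega

theorem oriented_path_is_geodesic_general
    (G : SimpleGraph V) (hconn : G.Connected)
    (f₀ f₁ : V →₀ ℝ)
    (γ : ℕ → V) (n : ℕ)
    (hpath : ∀ i < n, OrientedEdge G f₀ f₁ (γ i) (γ (i + 1))) :
    G.dist (γ 0) (γ n) = n := by
  refine le_antisymm (dist_le_of_forall_adj fun i hi => (hpath i hi).adj) ?_
  cases n with
  | zero => exact Nat.zero_le _
  | succ m => exact le_dist_of_forall_orientedEdge hconn fun i hi => hpath i (by omega)

theorem oriented_path_is_geodesic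
    (G : SimpleGraph V) (hconn : G.Connected) [G.LocallyFinite]
    (f₀ f₁ : V →₀ ℝ) (h₀ : IsProb f₀) (h₁ : IsProb f₁)
    (γ : ℕ → V) (n : ℕ)
    (hpath : ∀ i < n, OrientedEdge G f₀ f₁ (γ i) (γ (i + 1))) :
    G.dist (γ 0) (γ n) = n :=
  oriented_path_is_geodesic_general G hconn f₀ f₁ γ n hpath
end
end

section
/- Let (f_t) be a W₁-geodesic on a graph G between finitely supported f₀ and f₁. For 0 ≤ s ≤ t ≤ 1, if an edge (x,y) is oriented x→y in the W₁-orientation with respect to f_s, f_t, then it is also oriented x→y in the W₁-orientation with respect to f₀, f₁. -/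
open scoped BigOperators Classical

noncomputable section

variable {V : Type*}

/-- The Wasserstein distance W₁ on the graph G. -/
def W1 (G : SimpleGraph V) (f₀ f₁ : V →₀ ℝ) : ℝ :=
  sInf {c | ∃ π, IsCoupling f₀ f₁ π ∧ gcost G π = c}

/-!
Glue optimal couplings `π₁ ∈ Π(f₀, f_s)`, `π₂ ∈ Π(f_s, f_t)`, `π₃ ∈ Π(f_t, f₁)` along their
shared marginals, sending mass `π₁(a, m) π₂(m, c) / g(m)` along `a → m → c`. The glued plan costs
the sum of the costs minus the defect `∑ (d(a, m) + d(m, c) - d(a, c)) · weight ≥ 0`. Along a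
W₁-geodesic `W₁(f₀, f₁) = W₁(f₀, f_s) + W₁(f_s, f_t) + W₁(f_t, f₁)`, so the glued plan is optimal
for `(f₀, f₁)` and the defect vanishes: for every chain `a → u → v → b` charged by the three plans,
`d(a, b) = d(a, u) + d(u, v) + d(v, b)`. Hence a geodesic from `u` to `v` through `(x, y)`, with
`(u, v) ∈ C(f_s, f_t)`, extends to a geodesic from `a` to `b`, and `(a, b) ∈ C(f₀, f₁)`.
-/

section Coupling

variable {f g : V →₀ ℝ} {π : V × V →₀ ℝ}

lemma sum_ite_fst_eq_sum {S T : Finset V} (hπ : π.support ⊆ S ×ˢ T) (x : V) :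
    (π.sum fun p v => if p.1 = x then v else 0) = ∑ b ∈ T, π (x, b) := by
  rw [Finsupp.sum_of_support_subset π hπ _ (by simp), Finset.sum_product,
    Finset.sum_congr rfl fun a _ => Finset.sum_ite_irrel (a = x) T _ _]
  simp only [Finset.sum_const_zero, Finset.sum_ite_eq']
  split_ifs with hx
  · rfl
  refine (Finset.sum_eq_zero fun b _ => Finsupp.notMem_support_iff.1 fun hb => hx ?_).symm
  exact (Finset.mem_product.1 (hπ hb)).1

lemma sum_ite_snd_eq_sum {S T : Finset V} (hπ : π.support ⊆ S ×ˢ T) (y : V) :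
    (π.sum fun p v => if p.2 = y then v else 0) = ∑ a ∈ S, π (a, y) := by
  rw [Finsupp.sum_of_support_subset π hπ _ (by simp), Finset.sum_product]
  simp only [Finset.sum_ite_eq']
  rw [Finset.sum_ite_irrel, Finset.sum_const_zero]
  split_ifs with hy
  · rfl
  refine (Finset.sum_eq_zero fun a _ => Finsupp.notMem_support_iff.1 fun ha => hy ?_).symm
  exact (Finset.mem_product.1 (hπ ha)).2

lemma isCoupling_iff_of_support_subset {S T : Finset V} (hπ : π.support ⊆ S ×ˢ T) :
    IsCoupling f g π ↔ (∀ p, 0 ≤ π p) ∧ (∀ x, ∑ b ∈ T, π (x, b) = f x) ∧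
      ∀ y, ∑ a ∈ S, π (a, y) = g y := by
  simp only [IsCoupling, sum_ite_fst_eq_sum hπ, sum_ite_snd_eq_sum hπ]

lemma IsCoupling.apply_le_fst (h : IsCoupling f g π) (p : V × V) : π p ≤ f p.1 := by
  rw [← h.2.1 p.1, Finsupp.sum_of_support_subset π (Finset.subset_insert p _) _ (by simp)]
  refine le_of_eq_of_le (by simp)
    (Finset.single_le_sum (fun q _ => ?_) (Finset.mem_insert_self p _))
  split_ifs <;> simp [h.1 q]

lemma IsCoupling.apply_le_snd (h : IsCoupling f g π) (p : V × V) : π p ≤ g p.2 := by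
  rw [← h.2.2 p.2, Finsupp.sum_of_support_subset π (Finset.subset_insert p _) _ (by simp)]
  refine le_of_eq_of_le (by simp)
    (Finset.single_le_sum (fun q _ => ?_) (Finset.mem_insert_self p _))
  split_ifs <;> simp [h.1 q]

lemma IsCoupling.support_subset (h : IsCoupling f g π) : π.support ⊆ f.support ×ˢ g.support := by
  intro p hp
  have hpos : 0 < π p := (h.1 p).lt_of_ne' (Finsupp.mem_support_iff.1 hp)
  simp only [Finset.mem_product, Finsupp.mem_support_iff]
  exact ⟨(hpos.trans_le (h.apply_le_fst p)).ne', (hpos.trans_le (h.apply_le_snd p)).ne'⟩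

lemma IsCoupling.sum_fst (h : IsCoupling f g π) (x : V) : ∑ b ∈ g.support, π (x, b) = f x :=
  ((isCoupling_iff_of_support_subset h.support_subset).1 h).2.1 x

lemma IsCoupling.sum_snd (h : IsCoupling f g π) (y : V) : ∑ a ∈ f.support, π (a, y) = g y :=
  ((isCoupling_iff_of_support_subset h.support_subset).1 h).2.2 y

lemma IsCoupling.snd_nonneg (h : IsCoupling f g π) (y : V) : 0 ≤ g y :=
  h.sum_snd y ▸ Finset.sum_nonneg fun a _ => h.1 (a, y)

lemma IsCoupling.exists_pos_of_fst_pos (h : IsCoupling f g π) {x : V} (hx : 0 < f x) :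
    ∃ b, 0 < π (x, b) := by
  obtain ⟨b, -, hb⟩ := Finset.exists_ne_zero_of_sum_ne_zero ((h.sum_fst x).trans_ne hx.ne')
  exact ⟨b, (h.1 _).lt_of_ne' hb⟩

lemma IsCoupling.exists_pos_of_snd_pos (h : IsCoupling f g π) {y : V} (hy : 0 < g y) :
    ∃ a, 0 < π (a, y) := by
  obtain ⟨a, -, ha⟩ := Finset.exists_ne_zero_of_sum_ne_zero ((h.sum_snd y).trans_ne hy.ne')
  exact ⟨a, (h.1 _).lt_of_ne' ha⟩

end Coupling

section Glue

variable {f g h : V →₀ ℝ} {π₁ π₂ : V × V →₀ ℝ}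

def glueWeight (g : V →₀ ℝ) (π₁ π₂ : V × V →₀ ℝ) (a m c : V) : ℝ :=
  π₁ (a, m) * π₂ (m, c) / g m

def glue (g : V →₀ ℝ) (π₁ π₂ : V × V →₀ ℝ) : V × V →₀ ℝ :=
  Finsupp.onFinset (π₁.support.image Prod.fst ×ˢ π₂.support.image Prod.snd)
    (fun p => ∑ m ∈ g.support, glueWeight g π₁ π₂ p.1 m p.2) fun p hp => by
      obtain ⟨m, -, hm⟩ := Finset.exists_ne_zero_of_sum_ne_zero hp
      have h₁ : π₁ (p.1, m) ≠ 0 := fun h0 => hm (by simp [glueWeight, h0])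
      have h₂ : π₂ (m, p.2) ≠ 0 := fun h0 => hm (by simp [glueWeight, h0])
      exact Finset.mem_product.2 ⟨Finset.mem_image.2 ⟨_, Finsupp.mem_support_iff.2 h₁, rfl⟩,
        Finset.mem_image.2 ⟨_, Finsupp.mem_support_iff.2 h₂, rfl⟩⟩

lemma glue_apply (a c : V) :
    glue g π₁ π₂ (a, c) = ∑ m ∈ g.support, glueWeight g π₁ π₂ a m c :=
  rfl

lemma glueWeight_nonneg (h₁ : IsCoupling f g π₁) (h₂ : IsCoupling g h π₂) (a m c : V) :
    0 ≤ glueWeight g π₁ π₂ a m c :=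
  div_nonneg (mul_nonneg (h₁.1 _) (h₂.1 _)) (h₁.snd_nonneg m)

lemma glueWeight_pos (h₁ : IsCoupling f g π₁) {a m c : V} (ha : 0 < π₁ (a, m))
    (hc : 0 < π₂ (m, c)) : 0 < glueWeight g π₁ π₂ a m c :=
  div_pos (mul_pos ha hc) (ha.trans_le (h₁.apply_le_snd _))

lemma sum_glueWeight_right (h₂ : IsCoupling g h π₂) (a : V) {m : V} (hm : m ∈ g.support) :
    ∑ c ∈ h.support, glueWeight g π₁ π₂ a m c = π₁ (a, m) := by
  simp only [glueWeight]
  rw [← Finset.sum_div, ← Finset.mul_sum, h₂.sum_fst m,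
    mul_div_cancel_right₀ _ (Finsupp.mem_support_iff.1 hm)]

lemma sum_glueWeight_left (h₁ : IsCoupling f g π₁) (c : V) {m : V} (hm : m ∈ g.support) :
    ∑ a ∈ f.support, glueWeight g π₁ π₂ a m c = π₂ (m, c) := by
  simp only [glueWeight]
  rw [← Finset.sum_div, ← Finset.sum_mul, h₁.sum_snd m,
    mul_div_cancel_left₀ _ (Finsupp.mem_support_iff.1 hm)]

lemma support_glue_subset (h₁ : IsCoupling f g π₁) (h₂ : IsCoupling g h π₂) :
    (glue g π₁ π₂).support ⊆ f.support ×ˢ h.support :=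
  Finsupp.support_onFinset_subset.trans <| Finset.product_subset_product
    (Finset.image_subset_iff.2 fun _ hp => (Finset.mem_product.1 (h₁.support_subset hp)).1)
    (Finset.image_subset_iff.2 fun _ hp => (Finset.mem_product.1 (h₂.support_subset hp)).2)

lemma isCoupling_glue (h₁ : IsCoupling f g π₁) (h₂ : IsCoupling g h π₂) :
    IsCoupling f h (glue g π₁ π₂) := by
  refine (isCoupling_iff_of_support_subset (support_glue_subset h₁ h₂)).2
    ⟨fun p => Finset.sum_nonneg fun m _ => glueWeight_nonneg h₁ h₂ _ _ _, fun a => ?_, fun c => ?_⟩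
  · calc ∑ c ∈ h.support, glue g π₁ π₂ (a, c)
        = ∑ m ∈ g.support, ∑ c ∈ h.support, glueWeight g π₁ π₂ a m c := Finset.sum_comm
      _ = ∑ m ∈ g.support, π₁ (a, m) :=
        Finset.sum_congr rfl fun m hm => sum_glueWeight_right h₂ a hm
      _ = f a := h₁.sum_fst a
  · calc ∑ a ∈ f.support, glue g π₁ π₂ (a, c)
        = ∑ m ∈ g.support, ∑ a ∈ f.support, glueWeight g π₁ π₂ a m c := Finset.sum_comm
      _ = ∑ m ∈ g.support, π₂ (m, c) :=
        Finset.sum_congr rfl fun m hm => sum_glueWeight_left h₁ c hm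
      _ = h c := h₂.sum_snd c

lemma glue_pos (h₁ : IsCoupling f g π₁) (h₂ : IsCoupling g h π₂) {a m c : V}
    (ha : 0 < π₁ (a, m)) (hc : 0 < π₂ (m, c)) : 0 < glue g π₁ π₂ (a, c) := by
  have hm : m ∈ g.support := (Finset.mem_product.1 (h₁.support_subset
    (Finsupp.mem_support_iff.2 ha.ne'))).2
  exact (glueWeight_pos h₁ ha hc).trans_le
    (Finset.single_le_sum (fun m _ => glueWeight_nonneg h₁ h₂ a m c) hm)

end Glue

section Cost

variable {G : SimpleGraph V} {f g h : V →₀ ℝ} {π π₁ π₂ : V × V →₀ ℝ}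

lemma gcost_eq_sum {s : Finset (V × V)} (hs : π.support ⊆ s) :
    gcost G π = ∑ p ∈ s, (G.dist p.1 p.2 : ℝ) * π p :=
  Finsupp.sum_of_support_subset π hs _ (by simp)

lemma gcost_nonneg (hπ : ∀ p, 0 ≤ π p) : 0 ≤ gcost G π :=
  Finset.sum_nonneg fun p _ => mul_nonneg (Nat.cast_nonneg _) (hπ p)

lemma gcost_eq_sum_glueWeight_left (h₁ : IsCoupling f g π₁) (h₂ : IsCoupling g h π₂) :
    gcost G π₁ = ∑ a ∈ f.support, ∑ m ∈ g.support, ∑ c ∈ h.support,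
      (G.dist a m : ℝ) * glueWeight g π₁ π₂ a m c := by
  rw [gcost_eq_sum h₁.support_subset, Finset.sum_product]
  refine Finset.sum_congr rfl fun a _ => Finset.sum_congr rfl fun m hm => ?_
  rw [← Finset.mul_sum, sum_glueWeight_right h₂ a hm]

lemma gcost_eq_sum_glueWeight_right (h₁ : IsCoupling f g π₁) (h₂ : IsCoupling g h π₂) :
    gcost G π₂ = ∑ a ∈ f.support, ∑ m ∈ g.support, ∑ c ∈ h.support,
      (G.dist m c : ℝ) * glueWeight g π₁ π₂ a m c := by
  rw [gcost_eq_sum h₂.support_subset, Finset.sum_product, Finset.sum_comm (s := f.support)]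
  refine Finset.sum_congr rfl fun m hm => ?_
  rw [Finset.sum_comm (s := f.support)]
  refine Finset.sum_congr rfl fun c _ => ?_
  rw [← Finset.mul_sum, sum_glueWeight_left h₁ c hm]

lemma gcost_glue_eq_sum_glueWeight (h₁ : IsCoupling f g π₁) (h₂ : IsCoupling g h π₂) :
    gcost G (glue g π₁ π₂) = ∑ a ∈ f.support, ∑ m ∈ g.support, ∑ c ∈ h.support,
      (G.dist a c : ℝ) * glueWeight g π₁ π₂ a m c := by
  rw [gcost_eq_sum (support_glue_subset h₁ h₂), Finset.sum_product]
  refine Finset.sum_congr rfl fun a _ => ?_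
  simp only [glue_apply, Finset.mul_sum]
  exact Finset.sum_comm

lemma gcost_add_gcost_sub_gcost_glue (h₁ : IsCoupling f g π₁) (h₂ : IsCoupling g h π₂) :
    gcost G π₁ + gcost G π₂ - gcost G (glue g π₁ π₂) =
      ∑ a ∈ f.support, ∑ m ∈ g.support, ∑ c ∈ h.support,
        ((G.dist a m : ℝ) + G.dist m c - G.dist a c) * glueWeight g π₁ π₂ a m c := by
  simp only [gcost_eq_sum_glueWeight_left h₁ h₂, gcost_eq_sum_glueWeight_right h₁ h₂,
    gcost_glue_eq_sum_glueWeight h₁ h₂, ← Finset.sum_add_distrib, ← Finset.sum_sub_distrib,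
    add_mul, sub_mul]

lemma dist_defect_mul_glueWeight_nonneg (hconn : G.Connected) (h₁ : IsCoupling f g π₁)
    (h₂ : IsCoupling g h π₂) (a m c : V) :
    0 ≤ ((G.dist a m : ℝ) + G.dist m c - G.dist a c) * glueWeight g π₁ π₂ a m c :=
  mul_nonneg (sub_nonneg.2 (by exact_mod_cast hconn.dist_triangle))
    (glueWeight_nonneg h₁ h₂ a m c)

lemma gcost_glue_le (hconn : G.Connected) (h₁ : IsCoupling f g π₁) (h₂ : IsCoupling g h π₂) :
    gcost G (glue g π₁ π₂) ≤ gcost G π₁ + gcost G π₂ := by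
  refine sub_nonneg.1 ((gcost_add_gcost_sub_gcost_glue h₁ h₂).symm ▸ ?_)
  exact Finset.sum_nonneg fun a _ => Finset.sum_nonneg fun m _ => Finset.sum_nonneg fun c _ =>
    dist_defect_mul_glueWeight_nonneg hconn h₁ h₂ a m c

lemma dist_eq_add_of_gcost_glue_eq (hconn : G.Connected) (h₁ : IsCoupling f g π₁)
    (h₂ : IsCoupling g h π₂) (heq : gcost G (glue g π₁ π₂) = gcost G π₁ + gcost G π₂)
    {a m c : V} (ha : 0 < π₁ (a, m)) (hc : 0 < π₂ (m, c)) :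
    G.dist a c = G.dist a m + G.dist m c := by
  have hterm := dist_defect_mul_glueWeight_nonneg hconn h₁ h₂
  have hsum := gcost_add_gcost_sub_gcost_glue (G := G) h₁ h₂
  rw [heq, sub_self, eq_comm] at hsum
  have ham := Finset.mem_product.1 (h₁.support_subset (Finsupp.mem_support_iff.2 ha.ne'))
  have hmc := Finset.mem_product.1 (h₂.support_subset (Finsupp.mem_support_iff.2 hc.ne'))
  rw [Finset.sum_eq_zero_iff_of_nonneg fun a _ => Finset.sum_nonneg fun m _ =>
    Finset.sum_nonneg fun c _ => hterm a m c] at hsum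
  have hsum_a := hsum a ham.1
  rw [Finset.sum_eq_zero_iff_of_nonneg fun m _ => Finset.sum_nonneg fun c _ => hterm a m c]
    at hsum_a
  have hsum_am := hsum_a m ham.2
  rw [Finset.sum_eq_zero_iff_of_nonneg fun c _ => hterm a m c] at hsum_am
  have hslack := (mul_eq_zero.1 (hsum_am c hmc.2)).resolve_right (glueWeight_pos h₁ ha hc).ne'
  exact_mod_cast (sub_eq_zero.1 hslack).symm

end Cost

section Optimal

variable {G : SimpleGraph V} {f g h : V →₀ ℝ} {π π₁ π₂ : V × V →₀ ℝ}

lemma W1_le_gcost (hπ : IsCoupling f g π) : W1 G f g ≤ gcost G π :=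
  csInf_le ⟨0, by rintro _ ⟨π', hπ', rfl⟩; exact gcost_nonneg hπ'.1⟩ ⟨π, hπ, rfl⟩

lemma IsOptimalCoupling.W1_eq (hπ : IsOptimalCoupling G f g π) : W1 G f g = gcost G π :=
  le_antisymm (W1_le_gcost hπ.1) <| le_csInf ⟨_, π, hπ.1, rfl⟩ <| by
    rintro _ ⟨π', hπ', rfl⟩
    exact hπ.2 π' hπ'

lemma IsOptimalCoupling.gcost_glue_eq (hconn : G.Connected) (h₁ : IsOptimalCoupling G f g π₁)
    (h₂ : IsOptimalCoupling G g h π₂) (hW : W1 G f h = W1 G f g + W1 G g h) :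
    gcost G (glue g π₁ π₂) = gcost G π₁ + gcost G π₂ := by
  refine le_antisymm (gcost_glue_le hconn h₁.1 h₂.1) ?_
  rw [← h₁.W1_eq, ← h₂.W1_eq, ← hW]
  exact W1_le_gcost (isCoupling_glue h₁.1 h₂.1)

lemma IsOptimalCoupling.glue (hconn : G.Connected) (h₁ : IsOptimalCoupling G f g π₁)
    (h₂ : IsOptimalCoupling G g h π₂) (hW : W1 G f h = W1 G f g + W1 G g h) :
    IsOptimalCoupling G f h (glue g π₁ π₂) := by
  refine ⟨isCoupling_glue h₁.1 h₂.1, fun π hπ => ?_⟩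
  rw [h₁.gcost_glue_eq hconn h₂ hW, ← h₁.W1_eq, ← h₂.W1_eq, ← hW]
  exact W1_le_gcost hπ

end Optimal

section Existence

variable {α : Type*}

def extendByZero (s : Finset α) (u : s → ℝ) : α →₀ ℝ :=
  Finsupp.indicator s fun a ha => u ⟨a, ha⟩

lemma extendByZero_coe (s : Finset α) (u : s → ℝ) (i : s) : extendByZero s u i = u i :=
  Finsupp.indicator_of_mem i.2 _

lemma support_extendByZero_subset (s : Finset α) (u : s → ℝ) : (extendByZero s u).support ⊆ s :=
  Finsupp.support_indicator_subset _ _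

lemma continuous_extendByZero_apply (s : Finset α) (a : α) :
    Continuous fun u => extendByZero s u a := by
  simp only [extendByZero, Finsupp.indicator_apply]
  split_ifs
  exacts [continuous_apply _, continuous_const]

lemma extendByZero_restrict {s : Finset α} {φ : α →₀ ℝ} (hφ : φ.support ⊆ s) :
    extendByZero s (fun i => φ i) = φ := by
  ext a
  simp only [extendByZero, Finsupp.indicator_apply]
  split_ifs with ha
  · rfl
  · exact (Finsupp.notMem_support_iff.1 fun h => ha (hφ h)).symm

variable {f g : V →₀ ℝ}

lemma IsProb.exists_isCoupling (hf : IsProb f) (hg : IsProb g) : ∃ π, IsCoupling f g π := by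
  let π := Finsupp.onFinset (f.support ×ˢ g.support) (fun p => f p.1 * g p.2) fun p hp => by
    simp only [Finset.mem_product, Finsupp.mem_support_iff]
    exact ⟨left_ne_zero_of_mul hp, right_ne_zero_of_mul hp⟩
  refine ⟨π, (isCoupling_iff_of_support_subset Finsupp.support_onFinset_subset).2
    ⟨fun p => mul_nonneg (hf.1 _) (hg.1 _), fun x => ?_, fun y => ?_⟩⟩
  · simp only [Finsupp.onFinset_apply, ← Finset.mul_sum]
    exact (congrArg _ hg.2).trans (mul_one _)
  · simp only [Finsupp.onFinset_apply, ← Finset.sum_mul]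
    exact (congrArg (· * g y) hf.2).trans (one_mul _)

lemma isCompact_setOf_isCoupling :
    IsCompact {u | IsCoupling f g (extendByZero (f.support ×ˢ g.support) u)} := by
  set E := f.support ×ˢ g.support
  have hK : {u | IsCoupling f g (extendByZero E u)} =
      {u | ∀ p, 0 ≤ extendByZero E u p} ∩
      {u | ∀ x, ∑ b ∈ g.support, extendByZero E u (x, b) = f x} ∩
      {u | ∀ y, ∑ a ∈ f.support, extendByZero E u (a, y) = g y} := by
    ext u
    simp only [Set.mem_ofPred_eq, Set.mem_inter_iff, and_assoc]
    exact isCoupling_iff_of_support_subset (support_extendByZero_subset _ _)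
  have hK_closed : IsClosed {u | IsCoupling f g (extendByZero E u)} := by
    rw [hK]
    simp only [Set.ofPred_forall]
    refine ((isClosed_iInter fun p => isClosed_le continuous_const
      (continuous_extendByZero_apply E p)).inter (isClosed_iInter fun x => isClosed_eq ?_
        continuous_const)).inter (isClosed_iInter fun y => isClosed_eq ?_ continuous_const)
    all_goals exact continuous_finsetSum _ fun _ _ => continuous_extendByZero_apply E _
  refine (isCompact_univ_pi fun i : E => isCompact_Icc (a := 0) (b := f i.1.1)).of_isClosed_subset
    hK_closed fun u hu i _ => ?_
  rw [← extendByZero_coe E u i]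
  exact ⟨hu.1 _, hu.apply_le_fst _⟩

lemma exists_isOptimalCoupling_of_isCoupling {π : V × V →₀ ℝ} (G : SimpleGraph V)
    (hπ : IsCoupling f g π) : ∃ π, IsOptimalCoupling G f g π := by
  set E := f.support ×ˢ g.support
  have restrict_mem {π : V × V →₀ ℝ} (hπ : IsCoupling f g π) :
      (fun i : E => π i) ∈ {u | IsCoupling f g (extendByZero E u)} := by
    rwa [Set.mem_ofPred_eq, extendByZero_restrict hπ.support_subset]
  have hcost : Continuous fun u => gcost G (extendByZero E u) := by
    simp only [gcost_eq_sum (support_extendByZero_subset E _)]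
    exact continuous_finsetSum _ fun p _ =>
      continuous_const.mul (continuous_extendByZero_apply E p)
  obtain ⟨u, hu, hmin⟩ :=
    isCompact_setOf_isCoupling.exists_isMinOn ⟨_, restrict_mem hπ⟩ hcost.continuousOn
  refine ⟨extendByZero E u, hu, fun π' hπ' => ?_⟩
  have hle : gcost G (extendByZero E u) ≤ gcost G (extendByZero E fun i => π' i) :=
    hmin (restrict_mem hπ')
  rwa [extendByZero_restrict hπ'.support_subset] at hle

lemma IsProb.exists_isOptimalCoupling (G : SimpleGraph V) (hf : IsProb f) (hg : IsProb g) :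
    ∃ π, IsOptimalCoupling G f g π :=
  let ⟨_, hπ⟩ := hf.exists_isCoupling hg
  exists_isOptimalCoupling_of_isCoupling G hπ

end Existence

section Geodesic

variable {G : SimpleGraph V}

lemma exists_walk_getVert_eq_of_adj :
    ∀ (n : ℕ) (γ : ℕ → V), (∀ i < n, G.Adj (γ i) (γ (i + 1))) →
      ∃ w : G.Walk (γ 0) (γ n), w.length = n ∧ ∀ i ≤ n, w.getVert i = γ i
  | 0, γ, _ => ⟨.nil, rfl, fun i hi => by simp [Nat.le_zero.1 hi]⟩
  | n + 1, γ, hadj => by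
    obtain ⟨w, hw, hwγ⟩ := exists_walk_getVert_eq_of_adj n (fun i => γ (i + 1))
      fun i hi => hadj (i + 1) (by omega)
    refine ⟨.cons (hadj 0 n.succ_pos) w, by simp [hw], fun i hi => ?_⟩
    cases i with
    | zero => rfl
    | succ i => exact hwγ i (by omega)

lemma SimpleGraph.Walk.isGeodesic_getVert {a b : V} (w : G.Walk a b)
    (hw : w.length = G.dist a b) : IsGeodesic G w.getVert w.length :=
  ⟨fun _ hi => w.adj_getVert_succ hi, by rw [w.getVert_zero, w.getVert_length, hw]⟩

lemma IsGeodesic.exists_extension (hconn : G.Connected) {γ : ℕ → V} {n : ℕ}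
    (hγ : IsGeodesic G γ n) {a b : V} (hd : G.dist a b = G.dist a (γ 0) + n + G.dist (γ n) b) :
    ∃ (γ' : ℕ → V) (N j : ℕ), IsGeodesic G γ' N ∧ γ' 0 = a ∧ γ' N = b ∧ j + n ≤ N ∧
      ∀ i ≤ n, γ' (j + i) = γ i := by
  obtain ⟨p, hp⟩ := hconn.exists_walk_length_eq_dist a (γ 0)
  obtain ⟨r, hr, hrγ⟩ := exists_walk_getVert_eq_of_adj n γ hγ.1
  obtain ⟨q, hq⟩ := hconn.exists_walk_length_eq_dist (γ n) b
  let w := p.append (r.append q)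
  have hw : w.length = p.length + n + q.length := by
    simp only [w, SimpleGraph.Walk.length_append, hr]
    ring
  refine ⟨w.getVert, w.length, p.length, w.isGeodesic_getVert (by rw [hw, hd, hp, hq]),
    w.getVert_zero, w.getVert_length, by omega, fun i hi => ?_⟩
  rw [SimpleGraph.Walk.getVert_append, if_neg (by omega), Nat.add_sub_cancel_left,
    SimpleGraph.Walk.getVert_append', if_pos (hr.symm ▸ hi), hrγ i hi]

end Geodesic

theorem W1_orientation_restriction_general
    (G : SimpleGraph V) (hconn : G.Connected)
    (f : ℝ → V →₀ ℝ)
    (hprob : ∀ t ∈ Set.Icc (0 : ℝ) 1, IsProb (f t))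
    (hW : ∀ s t : ℝ, 0 ≤ s → s ≤ t → t ≤ 1 → W1 G (f s) (f t) = (t - s) * W1 G (f 0) (f 1))
    (s t : ℝ) (hs : 0 ≤ s) (hst : s ≤ t) (ht : t ≤ 1)
    (x y : V) (hxy : OrientedEdge G (f s) (f t) x y) :
    OrientedEdge G (f 0) (f 1) x y := by
  obtain ⟨γ, n, k, hγ, ⟨π₂, hπ₂, hpos⟩, hkn, rfl, rfl⟩ := hxy
  obtain ⟨π₁, hπ₁⟩ := (hprob 0 ⟨le_rfl, zero_le_one⟩).exists_isOptimalCoupling G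
    (hprob s ⟨hs, hst.trans ht⟩)
  obtain ⟨π₃, hπ₃⟩ := (hprob t ⟨hs.trans hst, ht⟩).exists_isOptimalCoupling G
    (hprob 1 ⟨zero_le_one, le_rfl⟩)
  have hW₁ : W1 G (f 0) (f t) = W1 G (f 0) (f s) + W1 G (f s) (f t) := by
    rw [hW 0 t le_rfl (hs.trans hst) ht, hW 0 s le_rfl hs (hst.trans ht), hW s t hs hst ht]
    ring
  have hW₂ : W1 G (f 0) (f 1) = W1 G (f 0) (f t) + W1 G (f t) (f 1) := by
    rw [hW 0 t le_rfl (hs.trans hst) ht, hW t 1 (hs.trans hst) ht le_rfl]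
    ring
  have hτ := hπ₁.glue hconn hπ₂ hW₁
  obtain ⟨a, ha⟩ := hπ₁.1.exists_pos_of_snd_pos (hpos.trans_le (hπ₂.1.apply_le_fst _))
  obtain ⟨b, hb⟩ := hπ₃.1.exists_pos_of_fst_pos (hpos.trans_le (hπ₂.1.apply_le_snd _))
  have hτpos := glue_pos hπ₁.1 hπ₂.1 ha hpos
  have hd : G.dist a b = G.dist a (γ 0) + n + G.dist (γ n) b := by
    rw [dist_eq_add_of_gcost_glue_eq hconn hτ.1 hπ₃.1 (hτ.gcost_glue_eq hconn hπ₃ hW₂) hτpos hb,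
      dist_eq_add_of_gcost_glue_eq hconn hπ₁.1 hπ₂.1 (hπ₁.gcost_glue_eq hconn hπ₂ hW₁) ha hpos,
      hγ.2]
  obtain ⟨γ', N, j, hγ', rfl, rfl, hjN, hγ'γ⟩ := hγ.exists_extension hconn hd
  refine ⟨γ', N, j + k, hγ', ⟨_, hτ.glue hconn hπ₃ hW₂, glue_pos hτ.1 hπ₃.1 hτpos hb⟩,
    by omega, hγ'γ k (by omega), hγ'γ (k + 1) hkn⟩

theorem W1_orientation_restriction
    (G : SimpleGraph V) (hconn : G.Connected) [G.LocallyFinite]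
    (f : ℝ → V →₀ ℝ)
    (hprob : ∀ t ∈ Set.Icc (0 : ℝ) 1, IsProb (f t))
    (hW : ∀ s t : ℝ, 0 ≤ s → s ≤ t → t ≤ 1 → W1 G (f s) (f t) = (t - s) * W1 G (f 0) (f 1))
    (s t : ℝ) (hs : 0 ≤ s) (hst : s ≤ t) (ht : t ≤ 1)
    (x y : V) (hxy : OrientedEdge G (f s) (f t) x y) :
    OrientedEdge G (f 0) (f 1) x y :=
  W1_orientation_restriction_general G hconn f hprob hW s t hs hst ht x y hxy
end
end
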